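/- For all integers m, n ≥ 0, all x, y ∈ ℝ with |x| ≤ 1, |y| ≤ 1 and all ρ ∈ ℝ with |ρ| < 1, one has ∑_{j=0}^{∞} ρ^j · U_{j+m}(x) · U_{j+n}(y) = [ (ρ²x + x − 2ρy)·U_{m−1}(x)·T_n(y) + (−ρ³ + ρ − 2ρx² + 3ρ²xy + xy − 2ρy²)·U_{m−1}(x)·U_{n−1}(y) + (−2ρx + ρ²y + y)·T_m(x)·U_{n−1}(y) + (1 − ρ²)·T_m(x)·T_n(y) ] / w₂(x,y|ρ). -/

import Mathlib

open Polynomial Finset Real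

/-!
Write `x = cos θ`, `y = cos φ`. The sequences `j ↦ U_{j+m}(x)` and `j ↦ U_{j+n}(y)` satisfy
`u_{j+2} = 2x u_{j+1} - u_j`, with characteristic roots `e^{±iθ}` and `e^{±iφ}`, so their
product satisfies a recurrence of order four with characteristic roots `e^{±iθ ± iφ}`. Weighting
by `ρ^j` and summing, the generating function times
`w₂ = ∏ (1 - ρ e^{±iθ ± iφ}) = 1 - 4xyρ + (4x² + 4y² - 2)ρ² - 4xyρ³ + ρ⁴`
is a cubic in `ρ` determined by the first four terms, which reduce to `U_{m-1}, T_m, U_{n-1}, T_n`.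
Since `w₂ = |1 - ρ e^{i(θ+φ)}|² |1 - ρ e^{i(θ-φ)}|² > 0`, one can divide by it.
-/

theorem LinearRecurrence.tsum_sub_sum_range_eq {R : Type*} [CommRing R] [TopologicalSpace R]
    [IsTopologicalRing R] [T2Space R] (E : LinearRecurrence R) {u : ℕ → R} (hu : E.IsSolution u)
    (hs : Summable u) :
    ∑' j, u j - ∑ i ∈ range E.order, u i =
      ∑ i : Fin E.order, E.coeffs i * (∑' j, u j - ∑ l ∈ range i, u l) := by
  have tail (k : ℕ) : ∑' j, u (j + k) = ∑' j, u j - ∑ l ∈ range k, u l :=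
    eq_sub_of_add_eq' (hs.sum_add_tsum_nat_add k)
  have hs_tail (k : ℕ) : Summable fun j => u (j + k) := (summable_nat_add_iff k).2 hs
  simp only [← tail]
  calc ∑' j, u (j + E.order) = ∑' j, ∑ i : Fin E.order, E.coeffs i * u (j + i) := tsum_congr hu
    _ = ∑ i : Fin E.order, ∑' j, E.coeffs i * u (j + i) :=
      Summable.tsum_finsetSum fun i _ => (hs_tail i).mul_left _
    _ = _ := sum_congr rfl fun i _ => (hs_tail i).tsum_mul_left _

section ProductRecurrence

variable {R : Type*} [CommRing R]

/-- The coefficients are those of `∏ (X - ρ α^{±1} β^{±1})`, where `α + α⁻¹ = a` and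
`β + β⁻¹ = b`. It is an `abbrev` so that `Fin (productRecurrence a b ρ).order` reduces to `Fin 4`
inside instance arguments. -/
abbrev productRecurrence (a b ρ : R) : LinearRecurrence R :=
  ⟨4, ![-ρ ^ 4, a * b * ρ ^ 3, (2 - a ^ 2 - b ^ 2) * ρ ^ 2, a * b * ρ]⟩

theorem isSolution_productRecurrence {u v : ℕ → R} {a b : R} (ρ : R)
    (hu : ∀ j, u (j + 2) = a * u (j + 1) - u j) (hv : ∀ j, v (j + 2) = b * v (j + 1) - v j) :
    (productRecurrence a b ρ).IsSolution fun j => ρ ^ j * u j * v j := by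
  intro j
  have hu₂ := hu (j + 2); have hu₁ := hu (j + 1)
  have hv₂ := hv (j + 2); have hv₁ := hv (j + 1)
  simp only [add_assoc, Nat.reduceAdd] at hu₂ hu₁ hv₂ hv₁
  simp only [Fin.sum_univ_four, Fin.isValue, Matrix.cons_val_zero,
    Matrix.cons_val_one, Matrix.cons_val, Fin.coe_ofNat_eq_mod, Nat.reduceMod, Nat.zero_mod,
    Nat.one_mod, add_zero]
  rw [hu₂, hv₂, hu₁, hv₁, hu j, hv j]
  ring

end ProductRecurrence

namespace Polynomial.Chebyshev

theorem eval_U_natCast_add_two_add {R : Type*} [CommRing R] (k : ℤ) (x : R) (j : ℕ) :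
    (U R (((j + 2 : ℕ) : ℤ) + k)).eval x =
      2 * x * (U R (((j + 1 : ℕ) : ℤ) + k)).eval x - (U R ((j : ℤ) + k)).eval x := by
  push_cast
  rw [add_right_comm, U_add_two]
  simp [add_right_comm]

theorem abs_eval_U_real_le (k : ℕ) {x : ℝ} (hx : |x| ≤ 1) : |(U ℝ k).eval x| ≤ k + 1 := by
  induction k with
  | zero => simp
  | succ k ih =>
    have hT := abs_eval_T_real_le_one (k + 1) hx
    rw [Nat.cast_succ, U_eq_X_mul_U_add_T, eval_add, eval_mul, eval_X]
    calc |x * (U ℝ k).eval x + (T ℝ (k + 1)).eval x|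
        ≤ |x| * |(U ℝ k).eval x| + |(T ℝ (k + 1)).eval x| := by
          rw [← abs_mul]; exact abs_add_le _ _
      _ ≤ 1 * (k + 1) + 1 := by gcongr
      _ = ((k + 1 : ℕ) : ℝ) + 1 := by push_cast; ring

theorem summable_pow_mul_eval_U_mul_eval_U (m n : ℕ) {x y ρ : ℝ} (hx : |x| ≤ 1) (hy : |y| ≤ 1)
    (hρ : |ρ| < 1) :
    Summable fun j : ℕ => ρ ^ j * (U ℝ ((j : ℤ) + m)).eval x * (U ℝ ((j : ℤ) + n)).eval y := by
  have hρ' : ‖|ρ|‖ < 1 := by rwa [Real.norm_eq_abs, abs_abs]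
  have hg : Summable fun j : ℕ => ((j : ℝ) + m + 1) * (j + n + 1) * |ρ| ^ j := by
    have h (k : ℕ) := summable_pow_mul_geometric_of_norm_lt_one k hρ'
    refine (((h 2).add ((h 1).mul_left ((m : ℝ) + n + 2))).add
      ((h 0).mul_left (((m : ℝ) + 1) * (n + 1)))).congr fun j => ?_
    ring
  refine hg.of_norm_bounded fun j => ?_
  have hu := abs_eval_U_real_le (j + m) hx
  have hv := abs_eval_U_real_le (j + n) hy
  push_cast at hu hv
  rw [Real.norm_eq_abs, abs_mul, abs_mul, abs_pow]
  calc |ρ| ^ j * |(U ℝ ((j : ℤ) + m)).eval x| * |(U ℝ ((j : ℤ) + n)).eval y|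
      ≤ |ρ| ^ j * (j + m + 1) * (j + n + 1) := by gcongr
    _ = (j + m + 1) * (j + n + 1) * |ρ| ^ j := by ring

end Polynomial.Chebyshev

theorem one_add_sq_sub_two_mul_pos {ρ c : ℝ} (hρ : |ρ| < 1) (hc : |c| ≤ 1) :
    0 < 1 + ρ ^ 2 - 2 * ρ * c := by
  have h : ρ * c ≤ |ρ| :=
    (le_abs_self _).trans (by rw [abs_mul]; exact mul_le_of_le_one_right (abs_nonneg ρ) hc)
  nlinarith [sq_abs ρ, abs_nonneg ρ]

def w₂ (x y ρ : ℝ) : ℝ :=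
  (1 - ρ ^ 2) ^ 2 - 4 * x * y * ρ * (1 + ρ ^ 2) + 4 * ρ ^ 2 * (x ^ 2 + y ^ 2)

theorem w₂_cos_cos (θ φ ρ : ℝ) :
    w₂ (cos θ) (cos φ) ρ =
      (1 + ρ ^ 2 - 2 * ρ * cos (θ + φ)) * (1 + ρ ^ 2 - 2 * ρ * cos (θ - φ)) := by
  rw [w₂, cos_add, cos_sub]
  linear_combination (4 * ρ ^ 2 * sin φ ^ 2) * sin_sq_add_cos_sq θ +
    (4 * ρ ^ 2 * (1 - cos θ ^ 2)) * sin_sq_add_cos_sq φ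

theorem w₂_pos {x y ρ : ℝ} (hx : |x| ≤ 1) (hy : |y| ≤ 1) (hρ : |ρ| < 1) : 0 < w₂ x y ρ := by
  obtain ⟨hx₁, hx₂⟩ := abs_le.1 hx
  obtain ⟨hy₁, hy₂⟩ := abs_le.1 hy
  rw [← cos_arccos hx₁ hx₂, ← cos_arccos hy₁ hy₂, w₂_cos_cos]
  exact mul_pos (one_add_sq_sub_two_mul_pos hρ (abs_cos_le_one _))
    (one_add_sq_sub_two_mul_pos hρ (abs_cos_le_one _))

open Polynomial.Chebyshev in
theorem chebyshev_U_U_shifted_gen_fun (m n : ℕ) (x y ρ : ℝ)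
    (hx : |x| ≤ 1) (hy : |y| ≤ 1) (hρ : |ρ| < 1) :
    ∑' j : ℕ, ρ ^ j * (Chebyshev.U ℝ ((j : ℤ) + m)).eval x *
        (Chebyshev.U ℝ ((j : ℤ) + n)).eval y =
      ((ρ ^ 2 * x + x - 2 * ρ * y) * (Chebyshev.U ℝ ((m : ℤ) - 1)).eval x *
          (Chebyshev.T ℝ (n : ℤ)).eval y +
        (-ρ ^ 3 + ρ - 2 * ρ * x ^ 2 + 3 * ρ ^ 2 * x * y + x * y - 2 * ρ * y ^ 2) *
          (Chebyshev.U ℝ ((m : ℤ) - 1)).eval x * (Chebyshev.U ℝ ((n : ℤ) - 1)).eval y +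
        (-2 * ρ * x + ρ ^ 2 * y + y) * (Chebyshev.T ℝ (m : ℤ)).eval x *
          (Chebyshev.U ℝ ((n : ℤ) - 1)).eval y +
        (1 - ρ ^ 2) * (Chebyshev.T ℝ (m : ℤ)).eval x * (Chebyshev.T ℝ (n : ℤ)).eval y) /
        ((1 - ρ ^ 2) ^ 2 - 4 * x * y * ρ * (1 + ρ ^ 2) + 4 * ρ ^ 2 * (x ^ 2 + y ^ 2)) := by
  set u : ℕ → ℝ := fun j => (U ℝ ((j : ℤ) + m)).eval x
  set v : ℕ → ℝ := fun j => (U ℝ ((j : ℤ) + n)).eval y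
  have hu : ∀ j, u (j + 2) = 2 * x * u (j + 1) - u j := eval_U_natCast_add_two_add m x
  have hv : ∀ j, v (j + 2) = 2 * y * v (j + 1) - v j := eval_U_natCast_add_two_add n y
  have key := (productRecurrence (2 * x) (2 * y) ρ).tsum_sub_sum_range_eq
    (isSolution_productRecurrence ρ hu hv) (summable_pow_mul_eval_U_mul_eval_U m n hx hy hρ)
  simp only [Fin.sum_univ_four, sum_range_succ, range_zero, sum_empty,
    Fin.isValue, Matrix.cons_val_zero, Matrix.cons_val_one, Matrix.cons_val, Fin.coe_ofNat_eq_mod,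
    Nat.reduceMod, Nat.zero_mod, Nat.one_mod, pow_zero, pow_one, one_mul, zero_add, sub_zero] at key
  have hu₀ : u 0 = x * (U ℝ ((m : ℤ) - 1)).eval x + (T ℝ m).eval x := by
    simpa [u] using congrArg (eval x) (U_eq_X_mul_U_add_T ℝ ((m : ℤ) - 1))
  have hv₀ : v 0 = y * (U ℝ ((n : ℤ) - 1)).eval y + (T ℝ n).eval y := by
    simpa [v] using congrArg (eval y) (U_eq_X_mul_U_add_T ℝ ((n : ℤ) - 1))
  have hu₁ : u 1 = 2 * x * u 0 - (U ℝ ((m : ℤ) - 1)).eval x := by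
    simpa [u, add_comm] using congrArg (eval x) (U_add_one ℝ m)
  have hv₁ : v 1 = 2 * y * v 0 - (U ℝ ((n : ℤ) - 1)).eval y := by
    simpa [v, add_comm] using congrArg (eval y) (U_add_one ℝ n)
  rw [hu 1, hv 1, hu 0, hv 0, hu₁, hv₁, hu₀, hv₀] at key
  rw [← w₂, eq_div_iff (w₂_pos hx hy hρ).ne', w₂]
  linear_combination key
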